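/- Let f : E₁ → E₂ be a fiber homotopy equivalence between Hurewicz fibrations p₁ : E₁ → B and p₂ : E₂ → B. Then E₁ × {1} is a strong deformation retract of the mapping cylinder M_f, and the retraction can be chosen fiber-preserving over B with respect to the induced fibration p_f : M_f → B. -/

import Mathlib

open unitInterval Set

universe u

/-- A map `p : E → B` is a Hurewicz fibration if it is continuous and has the
homotopy lifting property with respect to every topological space. -/
def IsHurewiczFibration {E B : Type u} [TopologicalSpace E] [TopologicalSpace B]
    (p : E → B) : Prop :=
  Continuous p ∧
  ∀ (X : Type u) (_ : TopologicalSpace X) (h : C(X, E)) (H : C(X × I, B)),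
    (∀ x, H (x, 0) = p (h x)) →
    ∃ L : C(X × I, E), (∀ x, L (x, 0) = h x) ∧ ∀ z, p (L z) = H z

variable {E₁ E₂ B : Type u} [TopologicalSpace E₁] [TopologicalSpace E₂] [TopologicalSpace B]

/-- The relation generating the mapping cylinder of `f`: `(e,0) ∼ f e`. -/
def CylRel (f : E₁ → E₂) : (E₁ × I) ⊕ E₂ → (E₁ × I) ⊕ E₂ → Prop := fun a b =>
  ∃ e : E₁, a = Sum.inl (e, 0) ∧ b = Sum.inr (f e)

/-- The mapping cylinder `M_f = ((E₁ × I) ⊔ E₂)/((e,0) ∼ f e)`. -/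
def MappingCylinder (f : E₁ → E₂) : Type u := Quot (CylRel f)

instance (f : E₁ → E₂) : TopologicalSpace (MappingCylinder f) :=
  inferInstanceAs (TopologicalSpace (Quot (CylRel f)))

/-- The projection `p_f : M_f → B`. -/
def cylinderProj (p₁ : E₁ → B) (p₂ : E₂ → B) (f : E₁ → E₂)
    (hf : ∀ e, p₂ (f e) = p₁ e) : MappingCylinder f → B :=
  Quot.lift (Sum.elim (fun q => p₁ q.1) p₂) (by
    rintro a b ⟨e, rfl, rfl⟩
    simp [hf])

/-- The copy of `E₁` sitting in `M_f` as `E₁ × {1}`. -/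
def cylinderTop (f : E₁ → E₂) (e : E₁) : MappingCylinder f :=
  Quot.mk _ (Sum.inl (e, 1))

/-
The map `retraction : M_f → E₁`, given by `K₁` on the cylinder and `g` on `E₂`, makes
`r = top ∘ retraction` a fiberwise retraction of `M_f` onto the top, because `K₁ (e, 1) = e`. It is fiberwise homotopic
to the identity: collapse `M_f` onto `E₂`, run `K₂` backwards from `y` to `f (g y)`, climb the
cylinder over `g y`, and finish along `K₁`. This homotopy `H` moves the top, and is straightened
by homotopy extension for the pair `(M_f, E₁ × {1})`: the maps `H (t, x)` on `u = 0`, `x` on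
`t = 0`, `H (1 - u, r x)` on `t = 1` and `H (t (1 - u), x)` over the top agree where they meet,
and a retraction of the cube onto four of its faces, applied in the height coordinate of `M_f`,
extends them over `I × I × M_f`. The face `u = 1` is the required deformation, and it lies over
`B` because every piece does.
-/

theorem ContinuousMap.Homotopy.trans_apply_of_forall {X Y : Type*} [TopologicalSpace X]
    [TopologicalSpace Y] {f₀ f₁ f₂ : C(X, Y)} {P : X → Y → Prop} (F : Homotopy f₀ f₁)
    (G : Homotopy f₁ f₂) (hF : ∀ t x, P x (F (t, x))) (hG : ∀ t x, P x (G (t, x))) (t : I)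
    (x : X) : P x (F.trans G (t, x)) := by
  rw [Homotopy.trans_apply]
  split_ifs
  exacts [hF _ x, hG _ x]

/- Writing points of `I × I × X` as `(t, u, x)`, the map `(t, x) ↦ (τ, υ, Z)` stands for the face
`u = 1` of a retraction of `I × I × X` onto `(I × {0} ∪ {0, 1} × I) × X ∪ I × I × C`. -/
open ContinuousMap in
theorem exists_homotopyRel_of_homotopy {X B : Type*} [TopologicalSpace X] {A C : Set X}
    {r : C(X, X)} (hr : ∀ x, r x ∈ A) (hrA : ∀ a ∈ A, r a = a) {p : X → B}
    (H : Homotopy (ContinuousMap.id X) r) (hHp : ∀ t x, p (H (t, x)) = p x)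
    (hC : IsClosed C) (hCA : C ⊆ A) (Z : C(I × X, X)) (τ υ : C(I × X, I))
    (hface : ∀ w, υ w = 0 ∨ τ w = 0 ∨ τ w = 1 ∨ Z w ∈ C) (hZp : ∀ w, p (Z w) = p w.2)
    (hstart : ∀ x, Z (0, x) = x ∧ τ (0, x) = 0)
    (hend : ∀ x, Z (1, x) = x ∧ τ (1, x) = 1 ∧ υ (1, x) = 1)
    (hfix : ∀ t, ∀ a ∈ A, Z (t, a) = a ∧ υ (t, a) = 1) :
    ∃ R : HomotopyRel (ContinuousMap.id X) r A, ∀ t x, p (R (t, x)) = p x := by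
  classical
  have hrr : ∀ x, r (r x) = r x := fun x => hrA _ (hr x)
  have hrp : ∀ x, p (r x) = p x := fun x => by rw [← H.apply_one, hHp]
  let R : I × X → X := fun w =>
    if τ w = 1 then H (σ (υ w), r (Z w)) else H (τ w * σ (υ w), Z w)
  have hR : Continuous R := by
    refine Continuous.if (fun w hw => ?_) (by fun_prop) (by fun_prop)
    have hτ : τ w = 1 :=
      (isClosed_eq τ.continuous continuous_const).frontier_subset hw
    have hcl : IsClosed {w | υ w = 0 ∨ τ w = 0 ∨ Z w ∈ C} :=
      (isClosed_eq υ.continuous continuous_const).union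
        ((isClosed_eq τ.continuous continuous_const).union (hC.preimage Z.continuous))
    have hsub : {w | ¬τ w = 1} ⊆ {w | υ w = 0 ∨ τ w = 0 ∨ Z w ∈ C} := fun w hw => by
      rcases hface w with h | h | h | h <;> simp_all
    rw [← frontier_compl] at hw
    rcases closure_minimal hsub hcl (frontier_subset_closure hw) with h | h | h
    · simp [hτ, h, hrr]
    · simp [hτ] at h
    · simp [hτ, hrA _ (hCA h)]
  refine ⟨{ toFun := R
            continuous_toFun := hR
            map_zero_left := fun x => by simp [R, hstart x]
            map_one_left := fun x => by simp [R, hend x]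
            prop' := fun t a ha => by simp [R, hfix t a ha, hrA a ha] }, fun t x => ?_⟩
  change p (R (t, x)) = p x
  simp only [R]
  split_ifs <;> simp [hHp, hrp, hZp]

section Cube

variable {t s : ℝ}

/- For fixed `t`, the point `(1/2 + κ (t - 1/2), 2 - κ)` runs along the ray from `(1/2, 2)`
through `(t, 1)`, and `κ = radialScale t` is where the ray leaves the unit square through its
bottom or a vertical side. `cubeScale` keeps that value as long as `cubeS < 1`, so
`(cubeS, cubeT, cubeU)` lies on one of the faces `U = 0`, `T = 0`, `T = 1`, `S = 1` of the cube
(`cube_faces`). On the mapping cylinder `S` is the height, `T` the time and `U` the parameter of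
the homotopy being straightened. -/
noncomputable def radialScale (t : ℝ) : ℝ := 2 / max 1 (2 * |2 * t - 1|)

noncomputable def cubeScale (t s : ℝ) : ℝ := min (radialScale t) (1 + (1 - s) * radialScale t)

noncomputable def cubeS (t s : ℝ) : ℝ := min 1 (s * radialScale t)

noncomputable def cubeT (t s : ℝ) : ℝ := 1 / 2 + cubeScale t s * (t - 1 / 2)

noncomputable def cubeU (t s : ℝ) : ℝ := 2 - cubeScale t s

theorem radialScale_zero : radialScale 0 = 1 := by norm_num [radialScale]

theorem radialScale_one : radialScale 1 = 1 := by norm_num [radialScale]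

theorem one_le_radialScale (ht : t ∈ I) : 1 ≤ radialScale t := by
  have : |2 * t - 1| ≤ 1 := abs_le.2 ⟨by linarith [ht.1], by linarith [ht.2]⟩
  rw [radialScale, le_div_iff₀ (lt_max_of_lt_left one_pos), one_mul, max_le_iff]
  constructor <;> linarith

@[fun_prop]
theorem continuous_radialScale : Continuous radialScale :=
  continuous_const.div (by fun_prop) fun _ => (lt_max_of_lt_left one_pos).ne'

theorem cube_faces (t s : ℝ) : cubeU t s = 0 ∨ cubeT t s = 0 ∨ cubeT t s = 1 ∨ cubeS t s = 1 := by
  rcases le_or_gt (s * radialScale t) 1 with hs | hs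
  · have hκ : cubeScale t s = radialScale t := min_eq_left (by linarith)
    rcases le_or_gt (2 * |2 * t - 1|) 1 with ht | ht
    · left
      rw [cubeU, hκ, radialScale, max_eq_left ht]
      norm_num
    · have hd : 2 * cubeT t s - 1 = (2 * t - 1) / |2 * t - 1| := by
        rw [cubeT, hκ, radialScale, max_eq_right ht.le]
        field_simp
        ring
      rcases abs_cases (2 * t - 1) with ⟨habs, hpos⟩ | ⟨habs, hneg⟩
      · rw [habs, div_self (by linarith)] at hd
        right; right; left; linarith
      · rw [habs, div_neg, div_self (by linarith)] at hd
        right; left; linarith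
  · right; right; right
    exact min_eq_left hs.le

theorem cubeScale_of_radialScale_eq_one (ht : radialScale t = 1) (hs : s ≤ 1) :
    cubeScale t s = 1 := by
  rw [cubeScale, ht]
  exact min_eq_left (by linarith)

theorem cubeScale_one_right (ht : t ∈ I) : cubeScale t 1 = 1 := by
  rw [cubeScale, sub_self, zero_mul, add_zero]
  exact min_eq_right (one_le_radialScale ht)

theorem cubeS_zero_left (hs : s ≤ 1) : cubeS 0 s = s := by
  rw [cubeS, radialScale_zero, mul_one, min_eq_right hs]

theorem cubeS_one_left (hs : s ≤ 1) : cubeS 1 s = s := by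
  rw [cubeS, radialScale_one, mul_one, min_eq_right hs]

theorem cubeT_zero_left (hs : s ≤ 1) : cubeT 0 s = 0 := by
  rw [cubeT, cubeScale_of_radialScale_eq_one radialScale_zero hs]; norm_num

theorem cubeT_one_left (hs : s ≤ 1) : cubeT 1 s = 1 := by
  rw [cubeT, cubeScale_of_radialScale_eq_one radialScale_one hs]; norm_num

theorem cubeU_one_left (hs : s ≤ 1) : cubeU 1 s = 1 := by
  rw [cubeU, cubeScale_of_radialScale_eq_one radialScale_one hs]; norm_num

theorem cubeS_zero_right : cubeS t 0 = 0 := by simp [cubeS]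

theorem cubeS_one_right (ht : t ∈ I) : cubeS t 1 = 1 := by
  rw [cubeS, one_mul, min_eq_left (one_le_radialScale ht)]

theorem cubeU_one_right (ht : t ∈ I) : cubeU t 1 = 1 := by
  rw [cubeU, cubeScale_one_right ht]; norm_num

section Continuity

variable {X : Type*} [TopologicalSpace X] {a b : X → ℝ}

@[fun_prop]
theorem Continuous.cubeS (ha : Continuous a) (hb : Continuous b) :
    Continuous fun x => cubeS (a x) (b x) := by
  unfold _root_.cubeS; fun_prop

@[fun_prop]
theorem Continuous.cubeT (ha : Continuous a) (hb : Continuous b) :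
    Continuous fun x => cubeT (a x) (b x) := by
  unfold _root_.cubeT cubeScale; fun_prop

@[fun_prop]
theorem Continuous.cubeU (ha : Continuous a) (hb : Continuous b) :
    Continuous fun x => cubeU (a x) (b x) := by
  unfold _root_.cubeU cubeScale; fun_prop

end Continuity

end Cube

namespace MappingCylinder

section Cylinder

variable (f : E₁ → E₂)

def inl : C(E₁ × I, MappingCylinder f) := ⟨fun q => Quot.mk _ (.inl q), by fun_prop⟩

def inr : C(E₂, MappingCylinder f) := ⟨fun y => Quot.mk _ (.inr y), by fun_prop⟩

def top : C(E₁, MappingCylinder f) := ⟨cylinderTop f, by unfold cylinderTop; fun_prop⟩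

theorem inl_zero (e : E₁) : inl f (e, 0) = inr f (f e) := Quot.sound ⟨e, rfl, rfl⟩

theorem top_apply (e : E₁) : top f e = inl f (e, 1) := rfl

@[elab_as_elim]
theorem induction_on {f : E₁ → E₂} {motive : MappingCylinder f → Prop} (z : MappingCylinder f)
    (inl : ∀ q, motive (inl f q)) (inr : ∀ y, motive (inr f y)) : motive z := by
  induction z using Quot.ind with
  | mk a => cases a with
    | inl q => exact inl q
    | inr y => exact inr y

variable {f} {Y : Type*} [TopologicalSpace Y]

def lift (F₁ : C(E₁ × I, Y)) (F₂ : C(E₂, Y)) (h : ∀ e, F₁ (e, 0) = F₂ (f e)) :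
    C(MappingCylinder f, Y) :=
  ⟨Quot.lift (Sum.elim F₁ F₂) (by rintro _ _ ⟨e, rfl, rfl⟩; exact h e),
    continuous_quot_lift _ (F₁.continuous.sumElim F₂.continuous)⟩

@[simp]
theorem lift_inl (F₁ : C(E₁ × I, Y)) (F₂ : C(E₂, Y)) (h) (q : E₁ × I) :
    lift F₁ F₂ h (inl f q) = F₁ q := rfl

variable {T : Type*} [TopologicalSpace T] [LocallyCompactSpace T]

def liftProd (F₁ : C(T × (E₁ × I), Y)) (F₂ : C(T × E₂, Y))
    (h : ∀ t e, F₁ (t, (e, 0)) = F₂ (t, f e)) : C(T × MappingCylinder f, Y) :=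
  (lift (F₁.comp .prodSwap).curry (F₂.comp .prodSwap).curry
    fun e => ContinuousMap.ext fun t => h t e).uncurry.comp .prodSwap

@[simp]
theorem liftProd_inl (F₁ : C(T × (E₁ × I), Y)) (F₂ : C(T × E₂, Y)) (h) (t : T) (q : E₁ × I) :
    liftProd F₁ F₂ h (t, inl f q) = F₁ (t, q) := rfl

variable (f)

def height : C(MappingCylinder f, I) := lift ⟨Prod.snd, continuous_snd⟩ (.const E₂ 0) fun _ => rfl

@[simp]
theorem height_inr (y : E₂) : height f (inr f y) = 0 := rfl

noncomputable def raise : C(I × MappingCylinder f, MappingCylinder f) :=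
  liftProd ((inl f).comp ⟨fun w => (w.2.1, projIcc 0 1 zero_le_one (cubeS w.1 w.2.2)),
    by fun_prop⟩) ((inr f).comp .snd) fun t e => by
      simp [cubeS_zero_right, ← inl_zero]

theorem raise_inl (t : I) (q : E₁ × I) :
    raise f (t, inl f q) = inl f (q.1, projIcc 0 1 zero_le_one (cubeS t q.2)) := rfl

@[simp]
theorem raise_inr (t : I) (y : E₂) : raise f (t, inr f y) = inr f y := rfl

theorem height_raise (t : I) (z : MappingCylinder f) :
    height f (raise f (t, z)) = projIcc 0 1 zero_le_one (cubeS t (height f z)) :=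
  induction_on z (fun _ => rfl) fun _ => by simp [cubeS_zero_right]

theorem raise_zero (z : MappingCylinder f) : raise f (0, z) = z :=
  induction_on z (fun q => by simp [raise_inl, cubeS_zero_left q.2.2.2]) fun _ => rfl

theorem raise_one (z : MappingCylinder f) : raise f (1, z) = z :=
  induction_on z (fun q => by simp [raise_inl, cubeS_one_left q.2.2.2]) fun _ => rfl

theorem raise_top (t : I) (e : E₁) : raise f (t, top f e) = top f e := by
  simp [top_apply, raise_inl, cubeS_one_right t.2]

theorem mem_range_top_of_height_eq_one {z : MappingCylinder f} (hz : height f z = 1) :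
    z ∈ range (top f) := by
  revert hz
  refine induction_on z (fun q hq => ⟨q.1, ?_⟩) fun _ h => absurd h zero_ne_one
  rw [top_apply, ← show q.2 = 1 from hq]

noncomputable def cubeTime : C(I × MappingCylinder f, I) :=
  ⟨fun w => projIcc 0 1 zero_le_one (cubeT w.1 (height f w.2)), by fun_prop⟩

noncomputable def cubeParam : C(I × MappingCylinder f, I) :=
  ⟨fun w => projIcc 0 1 zero_le_one (cubeU w.1 (height f w.2)), by fun_prop⟩

theorem cubeTime_zero (z : MappingCylinder f) : cubeTime f (0, z) = 0 :=
  projIcc_eq_zero.2 (cubeT_zero_left (height f z).2.2).le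

theorem cubeTime_one (z : MappingCylinder f) : cubeTime f (1, z) = 1 :=
  projIcc_eq_one.2 (cubeT_one_left (height f z).2.2).ge

theorem cubeParam_one (z : MappingCylinder f) : cubeParam f (1, z) = 1 :=
  projIcc_eq_one.2 (cubeU_one_left (height f z).2.2).ge

theorem cubeParam_top (t : I) (e : E₁) : cubeParam f (t, top f e) = 1 :=
  projIcc_eq_one.2 (cubeU_one_right t.2).ge

theorem cube_faces (w : I × MappingCylinder f) :
    cubeParam f w = 0 ∨ cubeTime f w = 0 ∨ cubeTime f w = 1 ∨ height f (raise f w) = 1 := by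
  rcases _root_.cube_faces w.1 (height f w.2) with h | h | h | h
  · exact Or.inl (projIcc_eq_zero.2 h.le)
  · exact Or.inr (Or.inl (projIcc_eq_zero.2 h.le))
  · exact Or.inr (Or.inr (Or.inl (projIcc_eq_one.2 h.ge)))
  · exact Or.inr (Or.inr (Or.inr ((height_raise f _ _).trans (projIcc_eq_one.2 h.ge))))

end Cylinder

open ContinuousMap

section Retraction

variable (f : C(E₁, E₂)) (g : C(E₂, E₁)) (K₁ : C(E₁ × I, E₁)) (hK₁0 : ∀ x, K₁ (x, 0) = g (f x))

def collapse : C(MappingCylinder f, E₂) := lift (f.comp .fst) (.id E₂) fun _ => rfl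

@[simp]
theorem collapse_inl (q : E₁ × I) : collapse f (inl f q) = f q.1 := rfl

def retraction : C(MappingCylinder f, E₁) := lift K₁ g hK₁0

def collapseHomotopy : Homotopy (.id (MappingCylinder f)) ((inr f).comp (collapse f)) where
  toContinuousMap := liftProd ((inl f).comp ⟨fun w => (w.2.1, σ w.1 * w.2.2), by fun_prop⟩)
    ((inr f).comp .snd) fun t e => by simp [inl_zero]
  map_zero_left z := induction_on z (fun _ => by simp) fun _ => rfl
  map_one_left z := induction_on z (fun _ => by simp [inl_zero]) fun _ => rfl

def cylinderHomotopy : Homotopy ((inr f).comp f) (top f) :=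
  ⟨(inl f).comp .prodSwap, fun e => inl_zero f e, fun _ => rfl⟩

def retractionHomotopy : Homotopy (g.comp (collapse f)) (retraction f g K₁ hK₁0) where
  toContinuousMap := liftProd (K₁.comp ⟨fun w => (w.2.1, w.1 * w.2.2), by fun_prop⟩)
    (g.comp .snd) fun t e => by simp [hK₁0]
  map_zero_left z := induction_on z (fun _ => by simp [hK₁0]) fun _ => rfl
  map_one_left z := induction_on z (fun _ => by simp [retraction]) fun _ => rfl

variable (K₂ : C(E₂ × I, E₂)) (hK₂0 : ∀ y, K₂ (y, 0) = f (g y)) (hK₂1 : ∀ y, K₂ (y, 1) = y)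

noncomputable def inrTopHomotopy : Homotopy (inr f) ((top f).comp g) :=
  ((ContinuousMap.Homotopy.refl (inr f)).comp (⟨K₂.comp .prodSwap, hK₂0, hK₂1⟩ :
    Homotopy (f.comp g) (.id E₂)).symm).trans ((cylinderHomotopy f).compContinuousMap g)

noncomputable def topRetractionHomotopy :
    Homotopy (.id (MappingCylinder f)) ((top f).comp (retraction f g K₁ hK₁0)) :=
  (collapseHomotopy f).trans (((inrTopHomotopy f g K₂ hK₂0 hK₂1).compContinuousMap
    (collapse f)).trans
      ((ContinuousMap.Homotopy.refl (top f)).comp (retractionHomotopy f g K₁ hK₁0)))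

end Retraction

section Fiberwise

variable {B : Type u} (p₁ : E₁ → B) (p₂ : E₂ → B) (f : C(E₁, E₂)) (hf : ∀ e, p₂ (f e) = p₁ e)
  (g : C(E₂, E₁)) (hg : ∀ y, p₁ (g y) = p₂ y)
  (K₁ : C(E₁ × I, E₁)) (hK₁0 : ∀ x, K₁ (x, 0) = g (f x)) (hK₁fib : ∀ x t, p₁ (K₁ (x, t)) = p₁ x)
  (K₂ : C(E₂ × I, E₂)) (hK₂0 : ∀ y, K₂ (y, 0) = f (g y)) (hK₂1 : ∀ y, K₂ (y, 1) = y)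
  (hK₂fib : ∀ y t, p₂ (K₂ (y, t)) = p₂ y)

include hg hK₁fib hK₂fib in
theorem cylinderProj_topRetractionHomotopy (t : I) (z : MappingCylinder f) :
    cylinderProj p₁ p₂ f hf (topRetractionHomotopy f g K₁ hK₁0 K₂ hK₂0 hK₂1 (t, z)) =
      cylinderProj p₁ p₂ f hf z := by
  have hcollapse (z : MappingCylinder f) : p₂ (collapse f z) = cylinderProj p₁ p₂ f hf z :=
    induction_on z (fun q => hf q.1) fun _ => rfl
  have hinrTop (t : I) (y : E₂) :
      cylinderProj p₁ p₂ f hf (inrTopHomotopy f g K₂ hK₂0 hK₂1 (t, y)) = p₂ y := by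
    apply Homotopy.trans_apply_of_forall (P := fun y z => cylinderProj p₁ p₂ f hf z = p₂ y)
    · exact fun t y => hK₂fib y _
    · exact fun t y => hg y
  apply Homotopy.trans_apply_of_forall
    (P := fun z w => cylinderProj p₁ p₂ f hf w = cylinderProj p₁ p₂ f hf z)
  · exact fun t z => induction_on z (fun _ => rfl) fun _ => rfl
  apply Homotopy.trans_apply_of_forall
    (P := fun z w => cylinderProj p₁ p₂ f hf w = cylinderProj p₁ p₂ f hf z)
  · exact fun t z => (hinrTop t _).trans (hcollapse z)
  · exact fun t z => induction_on z (fun q => hK₁fib q.1 _) fun y => hg y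

theorem cylinderProj_raise (t : I) (z : MappingCylinder f) :
    cylinderProj p₁ p₂ f hf (raise f (t, z)) = cylinderProj p₁ p₂ f hf z :=
  induction_on z (fun _ => rfl) fun _ => rfl

include hg hK₁fib hK₂0 hK₂1 hK₂fib in
theorem exists_fiberwise_homotopyRel_top (hK₁1 : ∀ x, K₁ (x, 1) = x) :
    ∃ R : HomotopyRel (.id (MappingCylinder f)) ((top f).comp (retraction f g K₁ hK₁0))
        (range (top f)),
      ∀ t z, cylinderProj p₁ p₂ f hf (R (t, z)) = cylinderProj p₁ p₂ f hf z :=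
  exists_homotopyRel_of_homotopy (A := range (top f)) (fun _ => ⟨_, rfl⟩)
    (by rintro _ ⟨e, rfl⟩; exact congrArg (top f) (hK₁1 e))
    (topRetractionHomotopy f g K₁ hK₁0 K₂ hK₂0 hK₂1)
    (cylinderProj_topRetractionHomotopy p₁ p₂ f hf g hg K₁ hK₁0 hK₁fib K₂ hK₂0 hK₂1 hK₂fib)
    (isClosed_eq (height f).continuous continuous_const)
    (fun _ => mem_range_top_of_height_eq_one f) (raise f) (cubeTime f) (cubeParam f)
    (cube_faces f) (fun w => cylinderProj_raise p₁ p₂ f hf w.1 w.2)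
    (fun z => ⟨raise_zero f z, cubeTime_zero f z⟩)
    (fun z => ⟨raise_one f z, cubeTime_one f z, cubeParam_one f z⟩)
    (by rintro t _ ⟨e, rfl⟩; exact ⟨raise_top f t e, cubeParam_top f t e⟩)

end Fiberwise

end MappingCylinder

theorem cylinderTop_strong_deformation_retract_general
    (p₁ : E₁ → B) (p₂ : E₂ → B)
    (f : C(E₁, E₂)) (hf : ∀ e, p₂ (f e) = p₁ e)
    (g : C(E₂, E₁)) (hg : ∀ y, p₁ (g y) = p₂ y)
    (K₁ : C(E₁ × I, E₁)) (hK₁0 : ∀ x, K₁ (x, 0) = g (f x)) (hK₁1 : ∀ x, K₁ (x, 1) = x)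
    (hK₁fib : ∀ x t, p₁ (K₁ (x, t)) = p₁ x)
    (K₂ : C(E₂ × I, E₂)) (hK₂0 : ∀ y, K₂ (y, 0) = f (g y)) (hK₂1 : ∀ y, K₂ (y, 1) = y)
    (hK₂fib : ∀ y t, p₂ (K₂ (y, t)) = p₂ y) :
    ∃ R : C(MappingCylinder (f : E₁ → E₂) × I, MappingCylinder (f : E₁ → E₂)),
      (∀ z, R (z, 0) = z) ∧
      (∀ z, ∃ e : E₁, R (z, 1) = cylinderTop (f : E₁ → E₂) e) ∧
      (∀ z t, cylinderProj p₁ p₂ (f : E₁ → E₂) hf (R (z, t)) =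
        cylinderProj p₁ p₂ (f : E₁ → E₂) hf z) ∧
      (∀ (e : E₁) (t : I), R (cylinderTop (f : E₁ → E₂) e, t) =
        cylinderTop (f : E₁ → E₂) e) := by
  obtain ⟨R, hR⟩ := MappingCylinder.exists_fiberwise_homotopyRel_top p₁ p₂ f hf g hg K₁ hK₁0
    hK₁fib K₂ hK₂0 hK₂1 hK₂fib hK₁1
  exact ⟨R.toContinuousMap.comp .prodSwap, R.apply_zero, fun z => ⟨_, R.apply_one z⟩,
    fun z t => hR t z, fun e t => R.eq_fst t ⟨e, rfl⟩⟩

/-- If `f : E₁ → E₂` is a fiber homotopy equivalence between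
Hurewicz fibrations `p₁ : E₁ → B` and `p₂ : E₂ → B`, then `E₁ × {1}` is a strong
deformation retract of the mapping cylinder `M_f`, via a fiber preserving
deformation over `B` with respect to `p_f : M_f → B`. -/
theorem cylinderTop_strong_deformation_retract
    (p₁ : E₁ → B) (p₂ : E₂ → B)
    (hp₁ : IsHurewiczFibration p₁) (hp₂ : IsHurewiczFibration p₂)
    (f : C(E₁, E₂)) (hf : ∀ e, p₂ (f e) = p₁ e)
    (g : C(E₂, E₁)) (hg : ∀ y, p₁ (g y) = p₂ y)
    (K₁ : C(E₁ × I, E₁)) (hK₁0 : ∀ x, K₁ (x, 0) = g (f x)) (hK₁1 : ∀ x, K₁ (x, 1) = x)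
    (hK₁fib : ∀ x t, p₁ (K₁ (x, t)) = p₁ x)
    (K₂ : C(E₂ × I, E₂)) (hK₂0 : ∀ y, K₂ (y, 0) = f (g y)) (hK₂1 : ∀ y, K₂ (y, 1) = y)
    (hK₂fib : ∀ y t, p₂ (K₂ (y, t)) = p₂ y) :
    ∃ R : C(MappingCylinder (f : E₁ → E₂) × I, MappingCylinder (f : E₁ → E₂)),
      (∀ z, R (z, 0) = z) ∧
      (∀ z, ∃ e : E₁, R (z, 1) = cylinderTop (f : E₁ → E₂) e) ∧
      (∀ z t, cylinderProj p₁ p₂ (f : E₁ → E₂) hf (R (z, t)) =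
        cylinderProj p₁ p₂ (f : E₁ → E₂) hf z) ∧
      (∀ (e : E₁) (t : I), R (cylinderTop (f : E₁ → E₂) e, t) =
        cylinderTop (f : E₁ → E₂) e) :=
  cylinderTop_strong_deformation_retract_general p₁ p₂ f hf g hg K₁ hK₁0 hK₁1 hK₁fib K₂ hK₂0 hK₂1
    hK₂fib
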